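/- Let T be a linear exponential monad on a symmetric monoidal category (C,⊗,I) with finite coproducts. Hypernormalisation is natural in maps fᵢ : Aᵢ → Bᵢ of C: T(Σᵢ Tfᵢ) ∘ 𝒩 = 𝒩 ∘ T(Σᵢ fᵢ) : T(Σᵢ Aᵢ) → T(Σᵢ TBᵢ); and it is natural in Kleisli maps fᵢ : Aᵢ → TBᵢ: T(Σᵢ μ_{Bᵢ}) ∘ T(Σᵢ Tfᵢ) ∘ 𝒩 = T(Σᵢ μ_{Bᵢ}) ∘ 𝒩 ∘ T(Σᵢ fᵢ) : T(Σᵢ Aᵢ) → T(Σᵢ TBᵢ). -/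

import Mathlib

open CategoryTheory MonoidalCategory Limits

universe v u

variable {C : Type u} [Category.{v} C]

/-- A linear exponential monad on a symmetric monoidal category `(C,⊗,I)`: a monad `T`
together with a lifting of the symmetric monoidal structure of `C` to the Eilenberg–Moore
category `C^T` (making the forgetful functor strict symmetric monoidal) such that the
lifted structure is given by finite coproducts: the lifted unit is an initial `T`-algebra
and the lifted tensor of two algebras, with the specified (natural) coprojections, is
their coproduct in `C^T`. All data is recorded on underlying objects and morphisms of
`C`, which is possible precisely because the forgetful functor is strict symmetric
monoidal. -/
structure LinearExponential [MonoidalCategory C] [SymmetricCategory C] (T : Monad C) where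
  /-- the lifted algebra structure on the tensor of two algebras -/
  tstr : ∀ X Y : T.Algebra, T.obj (X.A ⊗ Y.A) ⟶ X.A ⊗ Y.A
  tstr_unit : ∀ X Y, T.η.app (X.A ⊗ Y.A) ≫ tstr X Y = 𝟙 (X.A ⊗ Y.A)
  tstr_mul : ∀ X Y, T.μ.app (X.A ⊗ Y.A) ≫ tstr X Y = T.map (tstr X Y) ≫ tstr X Y
  /-- the lifted algebra structure on the unit object -/
  ustr : T.obj (𝟙_ C) ⟶ 𝟙_ C
  ustr_unit : T.η.app (𝟙_ C) ≫ ustr = 𝟙 (𝟙_ C)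
  ustr_mul : T.μ.app (𝟙_ C) ≫ ustr = T.map ustr ≫ ustr
  /-- the tensor of two algebra morphisms is an algebra morphism -/
  tensorHom_alg : ∀ {X X' Y Y' : T.Algebra} (f : X ⟶ X') (g : Y ⟶ Y'),
    T.map (f.f ⊗ₘ g.f) ≫ tstr X' Y' = tstr X Y ≫ (f.f ⊗ₘ g.f)
  /-- the coherence constraints of `C` are algebra morphisms, so the monoidal structure
  (with all its constraints) lifts strictly -/
  assoc_alg : ∀ X Y Z : T.Algebra,
    T.map (α_ X.A Y.A Z.A).hom ≫ tstr X ⟨Y.A ⊗ Z.A, tstr Y Z, tstr_unit Y Z, tstr_mul Y Z⟩ =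
      tstr ⟨X.A ⊗ Y.A, tstr X Y, tstr_unit X Y, tstr_mul X Y⟩ Z ≫ (α_ X.A Y.A Z.A).hom
  lunit_alg : ∀ X : T.Algebra,
    T.map (λ_ X.A).hom ≫ X.a = tstr ⟨𝟙_ C, ustr, ustr_unit, ustr_mul⟩ X ≫ (λ_ X.A).hom
  runit_alg : ∀ X : T.Algebra,
    T.map (ρ_ X.A).hom ≫ X.a = tstr X ⟨𝟙_ C, ustr, ustr_unit, ustr_mul⟩ ≫ (ρ_ X.A).hom
  braid_alg : ∀ X Y : T.Algebra,
    T.map (β_ X.A Y.A).hom ≫ tstr Y X = tstr X Y ≫ (β_ X.A Y.A).hom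
  /-- the specified coprojections into the lifted tensor -/
  jl : ∀ X Y : T.Algebra, X.A ⟶ X.A ⊗ Y.A
  jr : ∀ X Y : T.Algebra, Y.A ⟶ X.A ⊗ Y.A
  jl_alg : ∀ X Y, T.map (jl X Y) ≫ tstr X Y = X.a ≫ jl X Y
  jr_alg : ∀ X Y, T.map (jr X Y) ≫ tstr X Y = Y.a ≫ jr X Y
  jl_natural : ∀ {X X' Y Y' : T.Algebra} (f : X ⟶ X') (g : Y ⟶ Y'),
    jl X Y ≫ (f.f ⊗ₘ g.f) = f.f ≫ jl X' Y'
  jr_natural : ∀ {X X' Y Y' : T.Algebra} (f : X ⟶ X') (g : Y ⟶ Y'),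
    jr X Y ≫ (f.f ⊗ₘ g.f) = g.f ≫ jr X' Y'
  /-- the lifted unit is an initial algebra -/
  unit_initial : ∀ B : T.Algebra, ∃! p : 𝟙_ C ⟶ B.A, T.map p ≫ B.a = ustr ≫ p
  /-- the lifted tensor with the coprojections is a binary coproduct in `C^T` -/
  tensor_coprod : ∀ (X Y Z : T.Algebra) (u : X.A ⟶ Z.A) (w : Y.A ⟶ Z.A),
    T.map u ≫ Z.a = X.a ≫ u → T.map w ≫ Z.a = Y.a ≫ w →
    ∃! h : X.A ⊗ Y.A ⟶ Z.A,
      (T.map h ≫ Z.a = tstr X Y ≫ h) ∧ jl X Y ≫ h = u ∧ jr X Y ≫ h = w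

namespace LinearExponential

variable [MonoidalCategory C] [SymmetricCategory C] {T : Monad C}

/-- The lifted unit algebra. -/
def uAlg (L : LinearExponential T) : T.Algebra :=
  ⟨𝟙_ C, L.ustr, L.ustr_unit, L.ustr_mul⟩

/-- The lifted tensor of two algebras. -/
def tAlg (L : LinearExponential T) (X Y : T.Algebra) : T.Algebra :=
  ⟨X.A ⊗ Y.A, L.tstr X Y, L.tstr_unit X Y, L.tstr_mul X Y⟩

/-- The `n`-fold lifted tensor `X₁ ⊗ (X₂ ⊗ (⋯ ⊗ I))` of a family of algebras. -/
def nAlg (L : LinearExponential T) : ∀ {n : ℕ}, (Fin n → T.Algebra) → T.Algebra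
  | 0, _ => L.uAlg
  | _ + 1, X => L.tAlg (X 0) (L.nAlg fun i => X i.succ)

/-- The `i`-th coprojection into the `n`-fold lifted tensor. -/
def nJ (L : LinearExponential T) :
    ∀ {n : ℕ} (X : Fin n → T.Algebra) (i : Fin n), (X i).A ⟶ (L.nAlg X).A
  | 0, _, i => i.elim0
  | n + 1, X, i =>
      Fin.cases (motive := fun i => (X i).A ⟶ (L.nAlg X).A)
        (L.jl (X 0) (L.nAlg fun k => X k.succ))
        (fun k => L.nJ (fun k => X k.succ) k ≫ L.jr (X 0) (L.nAlg fun k => X k.succ)) i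

/-- The tensor `η_{TA₁} ⊗ ⋯ ⊗ η_{TAₙ}` of unit components, as a morphism of `C` between
the carriers of the `n`-fold lifted tensors of free algebras. -/
def netaMap (L : LinearExponential T) :
    ∀ {n : ℕ} (A : Fin n → C),
      (L.nAlg fun i => T.free.obj (A i)).A ⟶ (L.nAlg fun i => T.free.obj (T.obj (A i))).A
  | 0, _ => 𝟙 _
  | _ + 1, A =>
      (T.η.app (T.obj (A 0)) ⊗ₘ L.netaMap fun i => A i.succ :
        T.obj (A 0) ⊗ (L.nAlg fun i => T.free.obj (A i.succ)).A ⟶ _)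

end LinearExponential

open LinearExponential

/-- The data of the canonical `T`-algebra isomorphism
`φ : F^T(A₁+⋯+Aₙ) ≅ F^T A₁ ⊗ ⋯ ⊗ F^T Aₙ` (which exists and is unique because the free
functor preserves finite coproducts, and the `n`-fold lifted tensor of free algebras is
their coproduct in `C^T`): an invertible map commuting with the algebra structures whose
composites with the maps `Tιᵢ` are the coprojections. -/
structure PhiData [MonoidalCategory C] [SymmetricCategory C] [HasFiniteCoproducts C]
    {T : Monad C} (L : LinearExponential T) {n : ℕ} (A : Fin n → C) where
  φ : T.obj (∐ A) ⟶ (L.nAlg fun i => T.free.obj (A i)).A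
  inv : (L.nAlg fun i => T.free.obj (A i)).A ⟶ T.obj (∐ A)
  hom_inv : φ ≫ inv = 𝟙 _
  inv_hom : inv ≫ φ = 𝟙 _
  alg : T.map φ ≫ (L.nAlg fun i => T.free.obj (A i)).a = T.μ.app (∐ A) ≫ φ
  comm : ∀ i : Fin n, T.map (Sigma.ι A i) ≫ φ = L.nJ (fun i => T.free.obj (A i)) i

/-- The `n`-ary hypernormalisation map
`𝒩 = φ⁻¹ ∘ (η_{TA₁} ⊗ ⋯ ⊗ η_{TAₙ}) ∘ φ : T(Σᵢ Aᵢ) ⟶ T(Σᵢ TAᵢ)`. -/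
noncomputable def hyperN [MonoidalCategory C] [SymmetricCategory C] [HasFiniteCoproducts C]
    {T : Monad C} (L : LinearExponential T) {n : ℕ} (A : Fin n → C)
    (p : PhiData L A) (q : PhiData L fun i => T.obj (A i)) :
    T.obj (∐ A) ⟶ T.obj (∐ fun i => T.obj (A i)) :=
  p.φ ≫ L.netaMap A ≫ q.inv

section Aux

variable [MonoidalCategory C] [SymmetricCategory C] {T : Monad C}

/-- The `n`-fold tensor of a family of morphisms between carriers. -/
def nTensor (L : LinearExponential T) :
    ∀ {n : ℕ} {X Y : Fin n → T.Algebra}, (∀ i, (X i).A ⟶ (Y i).A) →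
      ((L.nAlg X).A ⟶ (L.nAlg Y).A)
  | 0, _, _, _ => 𝟙 _
  | _ + 1, X, Y, f =>
      (f 0 ⊗ₘ nTensor L (X := fun i => X i.succ) (Y := fun i => Y i.succ)
        (fun i => f i.succ))

theorem nTensor_comp (L : LinearExponential T) :
    ∀ {n : ℕ} {X Y Z : Fin n → T.Algebra} (f : ∀ i, (X i).A ⟶ (Y i).A)
      (g : ∀ i, (Y i).A ⟶ (Z i).A),
      nTensor L (X := X) (Y := Z) (fun i => f i ≫ g i) =
        nTensor L f ≫ nTensor L g
  | 0, _, _, _, _, _ => by simp only [nTensor]; exact (Category.comp_id _).symm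
  | n + 1, X, Y, Z, f, g => by
      simp only [nTensor]
      rw [nTensor_comp L (fun i => f i.succ) (fun i => g i.succ)]
      exact (tensorHom_comp_tensorHom _ _ _ _).symm

theorem nTensor_alg (L : LinearExponential T) :
    ∀ {n : ℕ} {X Y : Fin n → T.Algebra} (f : ∀ i, (X i).A ⟶ (Y i).A),
      (∀ i, T.map (f i) ≫ (Y i).a = (X i).a ≫ f i) →
      T.map (nTensor L f) ≫ (L.nAlg Y).a = (L.nAlg X).a ≫ nTensor L f
  | 0, _, _, _, _ => by
      simp only [nTensor]
      erw [T.map_id, Category.id_comp, Category.comp_id]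
      rfl
  | n + 1, X, Y, f, hf => by
      have ih := nTensor_alg L (X := fun i => X i.succ) (Y := fun i => Y i.succ)
        (fun i => f i.succ) (fun i => hf i.succ)
      exact L.tensorHom_alg (X := X 0) (X' := Y 0)
        (Y := L.nAlg fun i => X i.succ) (Y' := L.nAlg fun i => Y i.succ)
        ⟨f 0, hf 0⟩ ⟨nTensor L (fun i => f i.succ), ih⟩

theorem nJ_nTensor (L : LinearExponential T) :
    ∀ {n : ℕ} {X Y : Fin n → T.Algebra} (f : ∀ i, (X i).A ⟶ (Y i).A),
      (∀ i, T.map (f i) ≫ (Y i).a = (X i).a ≫ f i) →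
      ∀ i, L.nJ X i ≫ nTensor L f = f i ≫ L.nJ Y i
  | 0, _, _, _, _, i => i.elim0
  | n + 1, X, Y, f, hf, i => by
      have ih := nTensor_alg L (X := fun i => X i.succ) (Y := fun i => Y i.succ)
        (fun i => f i.succ) (fun i => hf i.succ)
      induction i using Fin.cases with
      | zero =>
          exact L.jl_natural (X := X 0) (X' := Y 0)
            (Y := L.nAlg fun i => X i.succ) (Y' := L.nAlg fun i => Y i.succ)
            ⟨f 0, hf 0⟩ ⟨nTensor L (fun i => f i.succ), ih⟩
      | succ k =>
          have hr := L.jr_natural (X := X 0) (X' := Y 0)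
            (Y := L.nAlg fun i => X i.succ) (Y' := L.nAlg fun i => Y i.succ)
            ⟨f 0, hf 0⟩ ⟨nTensor L (fun i => f i.succ), ih⟩
          have ihk := nJ_nTensor L (X := fun i => X i.succ) (Y := fun i => Y i.succ)
            (fun i => f i.succ) (fun i => hf i.succ) k
          show (L.nJ (fun i => X i.succ) k ≫ _) ≫ nTensor L f =
            f k.succ ≫ L.nJ (fun i => Y i.succ) k ≫ _
          simp only [nTensor] at hr ⊢
          erw [Category.assoc, hr, ← Category.assoc, ihk, Category.assoc]

theorem netaMap_eq (L : LinearExponential T) :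
    ∀ {n : ℕ} (A : Fin n → C),
      L.netaMap A = nTensor L (X := fun i => T.free.obj (A i))
        (Y := fun i => T.free.obj (T.obj (A i))) (fun i => T.η.app (T.obj (A i)))
  | 0, _ => rfl
  | n + 1, A => by
      show (T.η.app (T.obj (A 0)) ⊗ₘ L.netaMap fun i => A i.succ) = _
      rw [netaMap_eq L (fun i => A i.succ)]
      rfl

/-- Two "algebra morphisms" out of the free algebra on a coproduct agree as soon
as they agree on the coprojections. -/
theorem free_coprod_hom_ext [HasFiniteCoproducts C] {n : ℕ} {A : Fin n → C} {Z : C}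
    (z : T.obj Z ⟶ Z) (h₁ h₂ : T.obj (∐ A) ⟶ Z)
    (alg₁ : T.map h₁ ≫ z = T.μ.app (∐ A) ≫ h₁)
    (alg₂ : T.map h₂ ≫ z = T.μ.app (∐ A) ≫ h₂)
    (w : ∀ i, T.map (Limits.Sigma.ι A i) ≫ h₁ = T.map (Limits.Sigma.ι A i) ≫ h₂) : h₁ = h₂ := by
  have key : ∀ h : T.obj (∐ A) ⟶ Z, T.map h ≫ z = T.μ.app (∐ A) ≫ h →
      h = T.map (T.η.app (∐ A) ≫ h) ≫ z := by
    intro h alg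
    rw [T.map_comp, Category.assoc, alg, ← Category.assoc, Monad.right_unit,
      Category.id_comp]
  have e : T.η.app (∐ A) ≫ h₁ = T.η.app (∐ A) ≫ h₂ := by
    apply Limits.Sigma.hom_ext
    intro i
    have nat : Limits.Sigma.ι A i ≫ T.η.app (∐ A) = T.η.app (A i) ≫ T.map (Limits.Sigma.ι A i) :=
      by simpa using T.η.naturality (Limits.Sigma.ι A i)
    rw [← Category.assoc, nat, ← Category.assoc, nat, Category.assoc,
      Category.assoc, w i]
  rw [key h₁ alg₁, key h₂ alg₂, e]

/-- The conjugation identity: transporting `T(Σᵢ fᵢ)` across the canonical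
isomorphisms yields the tensor `Tf₁ ⊗ ⋯ ⊗ Tfₙ`. -/
theorem conj_phi [HasFiniteCoproducts C] (L : LinearExponential T) {n : ℕ}
    {A B : Fin n → C} (f : ∀ i, A i ⟶ B i) (pA : PhiData L A) (pB : PhiData L B) :
    T.map (Limits.Sigma.map f) ≫ pB.φ =
      pA.φ ≫ nTensor L (X := fun i => T.free.obj (A i))
        (Y := fun i => T.free.obj (B i)) (fun i => T.map (f i)) := by
  have halg : ∀ i, T.map (T.map (f i)) ≫ (T.free.obj (B i)).a =
      (T.free.obj (A i)).a ≫ T.map (f i) := fun i => T.μ.naturality (f i)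
  apply free_coprod_hom_ext ((L.nAlg fun i => T.free.obj (B i)).a)
  · have mn : T.map (T.map (Limits.Sigma.map f)) ≫ T.μ.app (∐ B) =
        T.μ.app (∐ A) ≫ T.map (Limits.Sigma.map f) := T.μ.naturality (Limits.Sigma.map f)
    rw [T.map_comp, Category.assoc, pB.alg, ← Category.assoc, mn, Category.assoc]
  · erw [T.map_comp, Category.assoc, nTensor_alg L _ halg, ← Category.assoc,
      pA.alg, Category.assoc]
  · intro i
    have h1 : Limits.Sigma.ι A i ≫ Limits.Sigma.map f = f i ≫ Limits.Sigma.ι B i := by simp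
    have lhs : T.map (Limits.Sigma.ι A i) ≫ T.map (Limits.Sigma.map f) ≫ pB.φ =
        T.map (f i) ≫ L.nJ (fun i => T.free.obj (B i)) i := by
      rw [← Category.assoc, ← T.map_comp, h1, T.map_comp, Category.assoc, pB.comm i]
    have rhs : T.map (Limits.Sigma.ι A i) ≫ pA.φ ≫ nTensor L (X := fun i => T.free.obj (A i))
        (Y := fun i => T.free.obj (B i)) (fun i => T.map (f i)) =
        T.map (f i) ≫ L.nJ (fun i => T.free.obj (B i)) i := by
      rw [← Category.assoc, pA.comm i]
      exact nJ_nTensor L (X := fun i => T.free.obj (A i))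
        (Y := fun i => T.free.obj (B i)) (fun i => T.map (f i)) halg i
    rw [lhs, rhs]

/-- The inverse form of the conjugation identity. -/
theorem conj_phi_inv [HasFiniteCoproducts C] (L : LinearExponential T) {n : ℕ}
    {A B : Fin n → C} (f : ∀ i, A i ⟶ B i) (pA : PhiData L A) (pB : PhiData L B) :
    pA.inv ≫ T.map (Limits.Sigma.map f) =
      nTensor L (X := fun i => T.free.obj (A i))
        (Y := fun i => T.free.obj (B i)) (fun i => T.map (f i)) ≫ pB.inv := by
  have h : pA.φ ≫ nTensor L (X := fun i => T.free.obj (A i))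
      (Y := fun i => T.free.obj (B i)) (fun i => T.map (f i)) ≫ pB.inv =
      T.map (Limits.Sigma.map f) := by
    rw [← Category.assoc, ← conj_phi L f pA pB, Category.assoc, pB.hom_inv,
      Category.comp_id]
  rw [← h]
  simp only [← Category.assoc]
  rw [pA.inv_hom, Category.id_comp]

end Aux

/-- Hypernormalisation is natural in maps `fᵢ : Aᵢ → Bᵢ` of `C`:
`T(Σᵢ Tfᵢ) ∘ 𝒩 = 𝒩 ∘ T(Σᵢ fᵢ)`; and it is natural in Kleisli maps `gᵢ : Aᵢ → TBᵢ`: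
`T(Σᵢ μ_{Bᵢ}) ∘ T(Σᵢ Tgᵢ) ∘ 𝒩 = T(Σᵢ μ_{Bᵢ}) ∘ 𝒩 ∘ T(Σᵢ gᵢ)`. -/
theorem hypernormalisation_natural
    [MonoidalCategory C] [SymmetricCategory C] [HasFiniteCoproducts C]
    (T : Monad C) (L : LinearExponential T) {n : ℕ} (A B : Fin n → C)
    (pA : PhiData L A) (pTA : PhiData L fun i => T.obj (A i))
    (pB : PhiData L B) (pTB : PhiData L fun i => T.obj (B i))
    (pTTB : PhiData L fun i => T.obj (T.obj (B i))) :
    (∀ f : ∀ i, A i ⟶ B i,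
      hyperN L A pA pTA ≫ T.map (Limits.Sigma.map fun i => T.map (f i)) =
        T.map (Limits.Sigma.map f) ≫ hyperN L B pB pTB) ∧
    (∀ g : ∀ i, A i ⟶ T.obj (B i),
      hyperN L A pA pTA ≫ T.map (Limits.Sigma.map fun i => T.map (g i)) ≫
          T.map (Limits.Sigma.map fun i => T.μ.app (B i)) =
        T.map (Limits.Sigma.map g) ≫ hyperN L (fun i => T.obj (B i)) pTB pTTB ≫
          T.map (Limits.Sigma.map fun i => T.μ.app (B i))) := by
  constructor
  · intro f
    have c1 := conj_phi L f pA pB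
    have c2 := conj_phi_inv L (fun i => T.map (f i)) pTA pTB
    have key : nTensor L (X := fun i => T.free.obj (A i))
          (Y := fun i => T.free.obj (T.obj (A i))) (fun i => T.η.app (T.obj (A i))) ≫
        nTensor L (X := fun i => T.free.obj (T.obj (A i)))
          (Y := fun i => T.free.obj (T.obj (B i))) (fun i => T.map (T.map (f i))) =
        nTensor L (X := fun i => T.free.obj (A i))
          (Y := fun i => T.free.obj (B i)) (fun i => T.map (f i)) ≫
        nTensor L (X := fun i => T.free.obj (B i))
          (Y := fun i => T.free.obj (T.obj (B i)))
          (fun i => T.η.app (T.obj (B i))) := by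
      erw [← nTensor_comp L, ← nTensor_comp L]
      exact congrArg (nTensor L (X := fun i => T.free.obj (A i))
        (Y := fun i => T.free.obj (T.obj (B i))))
        (funext fun i => by have h := (T.η.naturality (T.map (f i))).symm; simp at h; exact h)
    simp only [hyperN, netaMap_eq, Category.assoc]
    rw [c2, reassoc_of% key, ← reassoc_of% c1]
  · intro g
    have c1 := conj_phi L g pA pTB
    have c2 := conj_phi_inv L (fun i => T.map (g i)) pTA pTTB
    have c3 := conj_phi_inv L (fun i => T.μ.app (B i)) pTTB pTB
    have key : nTensor L (X := fun i => T.free.obj (A i))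
          (Y := fun i => T.free.obj (T.obj (A i))) (fun i => T.η.app (T.obj (A i))) ≫
        nTensor L (X := fun i => T.free.obj (T.obj (A i)))
          (Y := fun i => T.free.obj (T.obj (T.obj (B i))))
          (fun i => T.map (T.map (g i))) =
        nTensor L (X := fun i => T.free.obj (A i))
          (Y := fun i => T.free.obj (T.obj (B i))) (fun i => T.map (g i)) ≫
        nTensor L (X := fun i => T.free.obj (T.obj (B i)))
          (Y := fun i => T.free.obj (T.obj (T.obj (B i))))
          (fun i => T.η.app (T.obj (T.obj (B i)))) := by
      erw [← nTensor_comp L, ← nTensor_comp L]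
      exact congrArg (nTensor L (X := fun i => T.free.obj (A i))
        (Y := fun i => T.free.obj (T.obj (T.obj (B i)))))
        (funext fun i => by have h := (T.η.naturality (T.map (g i))).symm; simp at h; exact h)
    simp only [hyperN, netaMap_eq, Category.assoc]
    rw [reassoc_of% c2, c3, reassoc_of% key, ← reassoc_of% c1]
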